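/- Fix an integer N ≥ 2, set ω := exp(2πi/N), and for x ∈ ℂ write ω^x := exp(2πi x/N). Let ζ, μ ∈ ℂ with ζ ∉ ℤ and ζ − 2μ ∉ ℤ. Then Σ_{n=0}^{N−1} [ (1 − ω^{−(ζ+n+1)})·(1 − ω^{ζ−2μ+n}) ]⁻¹ = N·( Σ_{t=0}^{N−1} ω^{−t(2μ+1)} ) / ( (1 − exp(−2πi ζ))·(1 − exp(2πi(ζ − 2μ))) ). -/

import Mathlib

/-!
Expand both factors as geometric series, `(1 - q)⁻¹ = (∑_{s<N} q^s) / (1 - q^N)`: with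
`a = ω^{-(ζ+1)}`, `b = ω^{ζ-2μ}` the `n`-th summand has `q = a ω^{-n}`, `r = b ω^n`, and
`q^N = a^N`, `r^N = b^N` do not depend on `n`. Summing over `n` first, orthogonality of the
characters `n ↦ ω^{n(t-s)}` keeps only the diagonal `s = t`, each with weight `N (ab)^s`.
-/

/-- `ww N x = ω^x := exp(2πi x/N)`, where `ω = exp(2πi/N)`. -/
noncomputable def ww (N : ℕ) (x : ℂ) : ℂ :=
  Complex.exp (2 * (Real.pi : ℂ) * Complex.I * x / N)

open Finset

section Field

variable {K : Type*} [Field K]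

theorem inv_one_sub_eq_geom_sum_div {q : K} {N : ℕ} (hq : q ^ N ≠ 1) :
    (1 - q)⁻¹ = (∑ s ∈ range N, q ^ s) / (1 - q ^ N) := by
  have hq1 : q ≠ 1 := by rintro rfl; simp at hq
  have h1 : 1 - q ≠ 0 := sub_ne_zero.mpr (Ne.symm hq1)
  have hN : 1 - q ^ N ≠ 0 := sub_ne_zero.mpr (Ne.symm hq)
  rw [geom_sum_eq hq1]
  field_simp
  ring

theorem IsPrimitiveRoot.sum_pow_div_pow {ω : K} {N : ℕ} (hω : IsPrimitiveRoot ω N)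
    {s t : ℕ} (hs : s < N) (ht : t < N) :
    ∑ n ∈ range N, (ω ^ n) ^ t / (ω ^ n) ^ s = if s = t then (N : K) else 0 := by
  have hω0 : ω ≠ 0 := hω.ne_zero (by omega)
  split_ifs with hst
  · subst hst
    simp [hω0]
  set ρ := ω ^ t / ω ^ s
  have hρ1 : ρ ≠ 1 := fun h =>
    hst (hω.pow_inj hs ht ((div_eq_one_iff_eq (pow_ne_zero s hω0)).mp h).symm)
  have hρN : ρ ^ N = 1 := by
    rw [div_pow, ← pow_mul, ← pow_mul, mul_comm t, mul_comm s, pow_mul, pow_mul,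
      hω.pow_eq_one, one_pow, one_pow, div_one]
  calc ∑ n ∈ range N, (ω ^ n) ^ t / (ω ^ n) ^ s = ∑ n ∈ range N, ρ ^ n := by
        refine sum_congr rfl fun n _ => ?_
        rw [div_pow, ← pow_mul, ← pow_mul, mul_comm n, mul_comm n, pow_mul, pow_mul]
    _ = 0 := by rw [geom_sum_eq hρ1, hρN, sub_self, zero_div]

theorem IsPrimitiveRoot.sum_inv_one_sub_div_mul_one_sub_mul {ω : K} {N : ℕ}
    (hω : IsPrimitiveRoot ω N) {a b : K} (ha : a ^ N ≠ 1) (hb : b ^ N ≠ 1) :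
    ∑ n ∈ range N, ((1 - a / ω ^ n) * (1 - b * ω ^ n))⁻¹ =
      N * (∑ t ∈ range N, (a * b) ^ t) / ((1 - a ^ N) * (1 - b ^ N)) := by
  have hωN (n : ℕ) : (ω ^ n) ^ N = 1 := by rw [pow_right_comm, hω.pow_eq_one, one_pow]
  have expand (n : ℕ) : ((1 - a / ω ^ n) * (1 - b * ω ^ n))⁻¹ =
      (∑ s ∈ range N, ∑ t ∈ range N, a ^ s * b ^ t * ((ω ^ n) ^ t / (ω ^ n) ^ s)) /
        ((1 - a ^ N) * (1 - b ^ N)) := by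
    have haN : (a / ω ^ n) ^ N = a ^ N := by rw [div_pow, hωN, div_one]
    have hbN : (b * ω ^ n) ^ N = b ^ N := by rw [mul_pow, hωN, mul_one]
    rw [mul_inv, inv_one_sub_eq_geom_sum_div (haN ▸ ha), inv_one_sub_eq_geom_sum_div (hbN ▸ hb),
      haN, hbN, div_mul_div_comm, sum_mul_sum]
    congr 1
    refine sum_congr rfl fun s _ => sum_congr rfl fun t _ => ?_
    rw [div_pow, mul_pow]
    ring
  calc ∑ n ∈ range N, ((1 - a / ω ^ n) * (1 - b * ω ^ n))⁻¹
      = (∑ s ∈ range N, ∑ t ∈ range N,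
          a ^ s * b ^ t * ∑ n ∈ range N, (ω ^ n) ^ t / (ω ^ n) ^ s) /
          ((1 - a ^ N) * (1 - b ^ N)) := by
        simp only [expand, ← sum_div, mul_sum]
        rw [sum_comm]
        exact congrArg (· / _) (sum_congr rfl fun s _ => sum_comm)
    _ = (∑ s ∈ range N, a ^ s * b ^ s * N) / ((1 - a ^ N) * (1 - b ^ N)) := by
        congr 1
        refine sum_congr rfl fun s hs => ?_
        rw [sum_congr rfl fun t ht => congrArg _
          (hω.sum_pow_div_pow (mem_range.mp hs) (mem_range.mp ht))]
        simp only [mul_ite, mul_zero, sum_ite_eq, if_pos hs]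
    _ = N * (∑ t ∈ range N, (a * b) ^ t) / ((1 - a ^ N) * (1 - b ^ N)) := by
        rw [mul_sum]
        exact congrArg (· / _) (sum_congr rfl fun _ _ => by ring)

end Field

namespace Complex

theorem exp_two_pi_mul_I_mul_ne_one {x : ℂ} (hx : ∀ k : ℤ, x ≠ k) :
    exp (2 * Real.pi * I * x) ≠ 1 := by
  intro h
  obtain ⟨k, hk⟩ := exp_eq_one_iff.mp h
  exact hx k (mul_left_cancel₀ two_pi_I_ne_zero (hk.trans (mul_comm _ _)))

end Complex

theorem ww_add (N : ℕ) (x y : ℂ) : ww N (x + y) = ww N x * ww N y := by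
  rw [ww, ww, ww, ← Complex.exp_add]
  ring_nf

theorem ww_natCast_mul (N n : ℕ) (x : ℂ) : ww N (n * x) = ww N x ^ n := by
  rw [ww, ww, ← Complex.exp_nat_mul]
  ring_nf

theorem ww_ne_zero (N : ℕ) (x : ℂ) : ww N x ≠ 0 := Complex.exp_ne_zero _

theorem ww_pow_eq_exp {N : ℕ} (hN : N ≠ 0) (x : ℂ) :
    ww N x ^ N = Complex.exp (2 * Real.pi * Complex.I * x) := by
  rw [ww, ← Complex.exp_nat_mul]
  field_simp

theorem isPrimitiveRoot_ww_one {N : ℕ} (hN : N ≠ 0) : IsPrimitiveRoot (ww N 1) N := by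
  simpa [ww] using Complex.isPrimitiveRoot_exp N hN

theorem stmt_15_general (N : ℕ) (ζ μ : ℂ)
    (hζ : ∀ k : ℤ, ζ ≠ (k : ℂ)) (hζμ : ∀ k : ℤ, ζ - 2 * μ ≠ (k : ℂ)) :
    ∑ n ∈ Finset.range N,
        ((1 - ww N (-(ζ + n + 1))) * (1 - ww N (ζ - 2 * μ + n)))⁻¹ =
      (N : ℂ) * (∑ t ∈ Finset.range N, ww N (-(t * (2 * μ + 1)))) /
        ((1 - Complex.exp (-(2 * (Real.pi : ℂ) * Complex.I * ζ))) *
          (1 - Complex.exp (2 * (Real.pi : ℂ) * Complex.I * (ζ - 2 * μ)))) := by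
  obtain rfl | hN := eq_or_ne N 0
  · simp
  have hleft (n : ℕ) : ww N (-(ζ + n + 1)) = ww N (-(ζ + 1)) / ww N 1 ^ n := by
    rw [eq_div_iff (pow_ne_zero n (ww_ne_zero N 1)), ← ww_natCast_mul, ← ww_add]
    ring_nf
  have hright (n : ℕ) : ww N (ζ - 2 * μ + n) = ww N (ζ - 2 * μ) * ww N 1 ^ n := by
    rw [← ww_natCast_mul, ← ww_add, mul_one]
  have hprod (t : ℕ) :
      ww N (-(t * (2 * μ + 1))) = (ww N (-(ζ + 1)) * ww N (ζ - 2 * μ)) ^ t := by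
    rw [← ww_add, ← ww_natCast_mul]
    ring_nf
  have hleftN : ww N (-(ζ + 1)) ^ N = Complex.exp (-(2 * Real.pi * Complex.I * ζ)) := by
    rw [ww_pow_eq_exp hN, ← Complex.exp_periodic.sub_eq (-(2 * Real.pi * Complex.I * ζ))]
    ring_nf
  have hrightN : ww N (ζ - 2 * μ) ^ N = Complex.exp (2 * Real.pi * Complex.I * (ζ - 2 * μ)) :=
    ww_pow_eq_exp hN _
  have hleftN_ne : ww N (-(ζ + 1)) ^ N ≠ 1 := by
    rw [hleftN, neg_mul_eq_mul_neg]
    exact Complex.exp_two_pi_mul_I_mul_ne_one fun k hk =>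
      hζ (-k) (by push_cast; rw [← hk, neg_neg])
  have hrightN_ne : ww N (ζ - 2 * μ) ^ N ≠ 1 :=
    hrightN ▸ Complex.exp_two_pi_mul_I_mul_ne_one hζμ
  simp only [hleft, hright, hprod, ← hleftN, ← hrightN]
  exact (isPrimitiveRoot_ww_one hN).sum_inv_one_sub_div_mul_one_sub_mul hleftN_ne hrightN_ne

/-- Fix `N ≥ 2`, `ω := exp(2πi/N)`. Let `ζ, μ ∈ ℂ` with `ζ ∉ ℤ` and
`ζ − 2μ ∉ ℤ`. Then
`Σ_{n=0}^{N−1} [(1 − ω^{−(ζ+n+1)})·(1 − ω^{ζ−2μ+n})]⁻¹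
  = N·(Σ_{t=0}^{N−1} ω^{−t(2μ+1)}) / ((1 − exp(−2πiζ))·(1 − exp(2πi(ζ − 2μ))))`. -/
theorem stmt_15 (N : ℕ) (hN : 2 ≤ N) (ζ μ : ℂ)
    (hζ : ∀ k : ℤ, ζ ≠ (k : ℂ)) (hζμ : ∀ k : ℤ, ζ - 2 * μ ≠ (k : ℂ)) :
    ∑ n ∈ Finset.range N,
        ((1 - ww N (-(ζ + n + 1))) * (1 - ww N (ζ - 2 * μ + n)))⁻¹ =
      (N : ℂ) * (∑ t ∈ Finset.range N, ww N (-(t * (2 * μ + 1)))) /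
        ((1 - Complex.exp (-(2 * (Real.pi : ℂ) * Complex.I * ζ))) *
          (1 - Complex.exp (2 * (Real.pi : ℂ) * Complex.I * (ζ - 2 * μ)))) :=
  stmt_15_general N ζ μ hζ hζμ
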